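/- arXiv:1404.3244 — 2 statements merged into one kernel-verified Lean document; each statement's English description precedes it below -/
import Mathlib

section
/- Let G be a finite connected bipartite simple graph with parts A and B, so that every edge of G joins a vertex of A to a vertex of B, and assume no vertex of G has valency larger than 3. Let n be the cardinality of B and let r be the number of endpoints of G lying in B. Then 4r ≤ 3(n + 1). -/
/-!
Count the edges `e` of `G`. Since `G` is bipartite, `e` is both the degree sum over `A` and the
degree sum over `B`. The degree bound gives `e ≤ 3 |A|` and, as an endpoint contributes only `1`
instead of up to `3`, `e + 2 r ≤ 3 n`. Connectivity gives `|A| + n ≤ e + 1`. Eliminating `e` and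
`|A|` from these three inequalities yields `4 r ≤ 3 (n + 1)`.
-/

open Finset

namespace SimpleGraph

variable {V : Type*} (G : SimpleGraph V) [Fintype V] [DecidableRel G.Adj]

lemma sum_degree_le_card_mul (s : Finset V) {k : ℕ} (hdeg : ∀ v, G.degree v ≤ k) :
    ∑ v ∈ s, G.degree v ≤ k * #s := by
  simpa [mul_comm] using sum_le_sum fun v (_ : v ∈ s) => hdeg v

lemma sum_degree_add_card_endpoints_le (s : Finset V) {k : ℕ} (hdeg : ∀ v, G.degree v ≤ k) :
    ∑ v ∈ s, G.degree v + (k - 1) * #{v ∈ s | G.degree v = 1} ≤ k * #s := by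
  rw [card_filter, mul_sum, ← sum_add_distrib]
  refine (sum_le_sum (g := fun _ => k) fun v _ => ?_).trans_eq (by simp [mul_comm])
  have := hdeg v
  split_ifs with h <;> omega

lemma Connected.card_le_card_edgeFinset_add_one (hG : G.Connected) :
    Fintype.card V ≤ #G.edgeFinset + 1 := by
  simpa [Nat.card_eq_fintype_card, edgeFinset_card] using hG.card_vert_le_card_edgeSet_add_one

end SimpleGraph

open SimpleGraph in
/-- Let `G` be a finite connected bipartite simple graph with parts `A`
and `B`, so that every edge of `G` joins a vertex of `A` to a vertex of `B`, and assume no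
vertex of `G` has valency larger than 3. Let `n` be the cardinality of `B` and `r` the
number of endpoints of `G` lying in `B`. Then `4 * r ≤ 3 * (n + 1)`. -/
theorem endpoints_le_in_bipartite_cubic_graph {V : Type*} [Fintype V] [DecidableEq V]
    (G : SimpleGraph V) [DecidableRel G.Adj]
    (A B : Finset V) (hdisj : Disjoint A B) (hcover : A ∪ B = Finset.univ)
    (hbip : ∀ u v, G.Adj u v → (u ∈ A ∧ v ∈ B) ∨ (u ∈ B ∧ v ∈ A))
    (hconn : G.Connected) (hdeg : ∀ v, G.degree v ≤ 3)
    (n r : ℕ)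
    (hn : n = B.card)
    (hr : r = (B.filter fun v => G.degree v = 1).card) :
    4 * r ≤ 3 * (n + 1) := by
  have hAB : G.IsBipartiteWith A B := ⟨disjoint_coe.mpr hdisj, hbip⟩
  have hedges_A := isBipartiteWith_sum_degrees_eq_card_edges hAB
  have hedges_B := isBipartiteWith_sum_degrees_eq_card_edges' hAB
  have hA := G.sum_degree_le_card_mul A hdeg
  have hB := G.sum_degree_add_card_endpoints_le B hdeg
  have hV : #A + #B = Fintype.card V := by
    rw [← card_union_of_disjoint hdisj, hcover, card_univ]
  have htree := hconn.card_le_card_edgeFinset_add_one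
  subst hn hr
  omega
end

section
/- Let p ≥ 3 be an integer and let G be a finite connected bipartite simple graph with parts A and B, so that every edge of G joins a vertex of A to a vertex of B, and assume no vertex of G has valency larger than p. Let m be the cardinality of B and let r be the number of endpoints of G lying in B. Then (p − 1)²·r ≤ p(p − 2)·m + p, i.e., r ≤ (p(p−2)/(p−1)²)·(m + 1/(p−2)). -/
/-!
Let `n = #A`, let `e` be the number of edges and `s = m - r` the number of vertices of `B` that are
not endpoints. Connectedness gives `n + m ≤ e + 1`. Counting edges from `A` gives `e ≤ p n`, and
counting them from `B` gives `e ≤ r + p s`. Hence `m ≤ (p - 1) n + 1` and `n ≤ (p - 1) s + 1`, so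
`m ≤ (p - 1)² (m - r) + p`, which rearranges to the claim.
-/

open Finset

theorem Finset.sum_le_card_filter_eq_one_add_mul {ι : Type*} (s : Finset ι) (f : ι → ℕ) {p : ℕ}
    (hf : ∀ i ∈ s, f i ≤ p) :
    ∑ i ∈ s, f i ≤ #(s.filter (f · = 1)) + p * #(s.filter (f · ≠ 1)) := by
  rw [← sum_filter_add_sum_filter_not s (f · = 1)]
  refine add_le_add (le_of_eq ?_) ?_
  · rw [card_eq_sum_ones]
    exact sum_congr rfl fun i hi => (mem_filter.1 hi).2
  · rw [mul_comm, ← smul_eq_mul, ← sum_const]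
    exact sum_le_sum fun i hi => hf i (mem_filter.1 hi).1

theorem sq_sub_one_mul_le_of_edge_count_bounds {p n r s e : ℕ}
    (hconn : n + (r + s) ≤ e + 1) (hleft : e ≤ p * n) (hright : e ≤ r + p * s) :
    (p - 1) ^ 2 * r ≤ p * (p - 2) * (r + s) + p := by
  obtain hp | hp := Nat.lt_or_ge p 2
  · simp [Nat.sub_eq_zero_of_le (Nat.le_of_lt_succ hp)]
  obtain ⟨q, rfl⟩ := Nat.exists_eq_add_of_le' hp
  have hB : r + s ≤ (q + 1) * n + 1 := by nlinarith
  have hA : n ≤ (q + 1) * s + 1 := by nlinarith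
  rw [show q + 2 - 1 = q + 1 by omega, Nat.add_sub_cancel]
  nlinarith

theorem endpoints_le_in_bipartite_graph_of_bounded_valency_general {V : Type*} [Fintype V]
    [DecidableEq V]
    (p : ℕ)
    (G : SimpleGraph V) [DecidableRel G.Adj]
    (A B : Finset V) (hdisj : Disjoint A B) (hcover : A ∪ B = Finset.univ)
    (hbip : ∀ u v, G.Adj u v → (u ∈ A ∧ v ∈ B) ∨ (u ∈ B ∧ v ∈ A))
    (hconn : G.Connected) (hdeg : ∀ v, G.degree v ≤ p)
    (m r : ℕ)
    (hm : m = B.card)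
    (hr : r = (B.filter fun v => G.degree v = 1).card) :
    (p - 1) ^ 2 * r ≤ p * (p - 2) * m + p := by
  have hG : G.IsBipartiteWith A B := ⟨disjoint_coe.mpr hdisj, hbip⟩
  have hcard : #A + #B ≤ #G.edgeFinset + 1 := by
    have := hconn.card_vert_le_card_edgeSet_add_one
    rwa [Nat.card_eq_fintype_card, Nat.card_eq_fintype_card, ← SimpleGraph.edgeFinset_card,
      ← card_univ, ← hcover, card_union_of_disjoint hdisj] at this
  have hleft : #G.edgeFinset ≤ p * #A := by
    rw [← SimpleGraph.isBipartiteWith_sum_degrees_eq_card_edges hG, mul_comm, ← smul_eq_mul,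
      ← sum_const]
    exact sum_le_sum fun v _ => hdeg v
  set s := #(B.filter (G.degree · ≠ 1))
  have hBrs : #B = r + s := hr ▸ (card_filter_add_card_filter_not _).symm
  have hright : #G.edgeFinset ≤ r + p * s := by
    rw [← SimpleGraph.isBipartiteWith_sum_degrees_eq_card_edges' hG, hr]
    exact sum_le_card_filter_eq_one_add_mul B _ fun v _ => hdeg v
  rw [hBrs] at hcard
  rw [hm, hBrs]
  exact sq_sub_one_mul_le_of_edge_count_bounds hcard hleft hright

/-- Let `p ≥ 3` be an integer and let `G` be a finite connected bipartite
simple graph with parts `A` and `B`, so that every edge of `G` joins a vertex of `A` to a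
vertex of `B`, and assume no vertex of `G` has valency larger than `p`. Let `m` be the
cardinality of `B` and `r` the number of endpoints of `G` lying in `B`. Then
`(p - 1)² * r ≤ p * (p - 2) * m + p`. -/
theorem endpoints_le_in_bipartite_graph_of_bounded_valency {V : Type*} [Fintype V]
    [DecidableEq V]
    (p : ℕ) (hp : 3 ≤ p)
    (G : SimpleGraph V) [DecidableRel G.Adj]
    (A B : Finset V) (hdisj : Disjoint A B) (hcover : A ∪ B = Finset.univ)
    (hbip : ∀ u v, G.Adj u v → (u ∈ A ∧ v ∈ B) ∨ (u ∈ B ∧ v ∈ A))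
    (hconn : G.Connected) (hdeg : ∀ v, G.degree v ≤ p)
    (m r : ℕ)
    (hm : m = B.card)
    (hr : r = (B.filter fun v => G.degree v = 1).card) :
    (p - 1) ^ 2 * r ≤ p * (p - 2) * m + p :=
  endpoints_le_in_bipartite_graph_of_bounded_valency_general p G A B hdisj hcover hbip hconn hdeg m
    r hm hr
end
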